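/- Let k ≥ 3 be an integer, a ∈ (ℤ/2^kℤ)ˣ with a ≡ 1 (mod 4), and b ∈ ℤ/2^kℤ with v(b) < v(a−1). Then for every x ∈ ℤ/2^kℤ, the least positive integer n with (λ(a,b))^n(x) = x equals addord(b) = 2^{k−v(b)}; that is, λ(a,b) is a product of 2^k/addord(b) disjoint cycles, each of length addord(b). -/

import Mathlib

/-- The affine permutation `λ(a,b) : x ↦ a·x + b` of `ZMod m`, for a unit `a` and an
element `b`. -/
def affinePerm (m : ℕ) (a : (ZMod m)ˣ) (b : ZMod m) : Equiv.Perm (ZMod m) where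
  toFun x := (a : ZMod m) * x + b
  invFun x := ((a⁻¹ : (ZMod m)ˣ) : ZMod m) * (x - b)
  left_inv x := by
    show (a⁻¹ : (ZMod m)ˣ) * ((a : ZMod m) * x + b - b) = x
    rw [add_sub_cancel_right, ← mul_assoc, Units.inv_mul, one_mul]
  right_inv x := by
    show (a : ZMod m) * ((a⁻¹ : (ZMod m)ˣ) * (x - b)) + b = x
    rw [← mul_assoc, Units.mul_inv, one_mul, sub_add_cancel]

/-- `padicV p k c` is `v(c) = max{ j ∈ {0,…,k} : c ∈ p^j·(ℤ/p^kℤ) }`: it is `k` for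
`c = 0`, and the `p`-adic valuation of the canonical representative `c.val` otherwise. -/
def padicV (p k : ℕ) (c : ZMod (p ^ k)) : ℕ :=
  if c = 0 then k else (c.val).factorization p

/-! Put `c = (a - 1)x + b`. Then `λ(a,b)ⁿ(x) - x = (1 + a + ⋯ + aⁿ⁻¹)·c`, and since
`v((a - 1)x) ≥ v(a - 1) > v(b)`, the element `c` has the same additive order
`2^{k - v(b)}` as `b`. As `a ≡ 1 (mod 4)`, lifting the exponent gives
`ν₂(1 + a + ⋯ + aⁿ⁻¹) = ν₂(n)`, so `λ(a,b)ⁿ` fixes `x` exactly when `2^{k - v(b)} ∣ n`. -/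

theorem Int.emultiplicity_two_geom_sum {A : ℤ} (hA : 4 ∣ A - 1) (n : ℕ) :
    emultiplicity 2 (∑ i ∈ Finset.range n, A ^ i) = emultiplicity 2 (n : ℤ) := by
  rcases eq_or_ne A 1 with rfl | hA1
  · simp
  have hodd : ¬ 2 ∣ A := by omega
  have hfin : emultiplicity 2 (A - 1) ≠ ⊤ := by
    rw [← finiteMultiplicity_iff_emultiplicity_ne_top, Int.finiteMultiplicity_iff]
    omega
  have lte := Int.two_pow_sub_pow' n hA hodd
  rw [one_pow, ← geom_sum_mul, emultiplicity_mul Int.prime_two, add_comm] at lte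
  exact WithTop.add_left_cancel hfin lte

theorem Int.two_pow_dvd_geom_sum_iff {A : ℤ} (hA : 4 ∣ A - 1) (m n : ℕ) :
    2 ^ m ∣ ∑ i ∈ Finset.range n, A ^ i ↔ 2 ^ m ∣ (n : ℤ) := by
  rw [pow_dvd_iff_le_emultiplicity, pow_dvd_iff_le_emultiplicity,
    Int.emultiplicity_two_geom_sum hA]

theorem geom_sum_mul_eq_zero_iff_two_pow_dvd {R : Type*} [Ring R] {a : R} {A : ℤ}
    (hA : 4 ∣ A - 1) (haA : (A : R) = a) {c : R} {m : ℕ} (hc : addOrderOf c = 2 ^ m) (n : ℕ) :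
    (∑ i ∈ Finset.range n, a ^ i) * c = 0 ↔ 2 ^ m ∣ n := by
  calc (∑ i ∈ Finset.range n, a ^ i) * c = 0
      ↔ ((∑ i ∈ Finset.range n, A ^ i : ℤ) : R) * c = 0 := by push_cast [haA]; rfl
    _ ↔ (addOrderOf c : ℤ) ∣ ∑ i ∈ Finset.range n, A ^ i := by
      rw [addOrderOf_dvd_iff_zsmul_eq_zero, zsmul_eq_mul]
    _ ↔ 2 ^ m ∣ n := by
      rw [hc, Nat.cast_pow, Nat.cast_ofNat, Int.two_pow_dvd_geom_sum_iff hA]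
      exact_mod_cast Iff.rfl

theorem ZMod.dvd_val_sub_one_of_castHom_eq_one {d m : ℕ} [NeZero m] (h : d ∣ m) {u : ZMod m}
    (hu : ZMod.castHom h (ZMod d) u = 1) : (d : ℤ) ∣ (u.val : ℤ) - 1 := by
  rw [← ZMod.intCast_zmod_eq_zero_iff_dvd, Int.cast_sub, Int.cast_one, sub_eq_zero, ← hu,
    Int.cast_natCast, ← map_natCast (ZMod.castHom h (ZMod d)), ZMod.natCast_zmod_val]

theorem addOrderOf_mul_dvd_addOrderOf_left {R : Type*} [NonUnitalRing R] (r s : R) :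
    addOrderOf (r * s) ∣ addOrderOf r :=
  addOrderOf_dvd_of_nsmul_eq_zero (by rw [← smul_mul_assoc, addOrderOf_nsmul_eq_zero, zero_mul])

theorem addOrderOf_add_eq_left_of_prime_mul_dvd {G : Type*} [AddCommMonoid G] {p j : ℕ}
    (hp : p.Prime) {c d : G} (hc : addOrderOf c = p ^ j) (hd : p * addOrderOf d ∣ addOrderOf c) :
    addOrderOf (c + d) = addOrderOf c := by
  rw [add_comm]
  refine (AddCommute.all d c).addOrderOf_add_eq_right_of_forall_prime_mul_dvd ?_ ?_
  · exact addOrderOf_pos_iff.mp (hc ▸ pow_pos hp.pos j)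
  · intro q hq hqd
    have : q ∣ p ^ j := hc ▸ hqd.trans (dvd_of_mul_left_dvd hd)
    rwa [(Nat.prime_dvd_prime_iff_eq hq hp).mp (hq.dvd_of_dvd_pow this)]

theorem padicV_le {p : ℕ} (hp : 1 < p) (k : ℕ) (c : ZMod (p ^ k)) : padicV p k c ≤ k := by
  unfold padicV
  split_ifs with hc
  · rfl
  have : NeZero (p ^ k) := ⟨by positivity⟩
  have hval := (ZMod.val_ne_zero c).mpr hc
  exact ((Nat.pow_lt_pow_iff_right hp).mp ((Nat.ordProj_le p hval).trans_lt (ZMod.val_lt c))).le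

theorem addOrderOf_eq_pow_sub_padicV {p k : ℕ} (hp : p.Prime) (c : ZMod (p ^ k)) :
    addOrderOf c = p ^ (k - padicV p k c) := by
  have : NeZero (p ^ k) := ⟨pow_ne_zero k hp.ne_zero⟩
  unfold padicV
  split_ifs with hc
  · simp [hc]
  have hval : c.val ≠ 0 := (ZMod.val_ne_zero c).mpr hc
  set v := c.val.factorization p
  have hvk : v ≤ k := by simpa [padicV, hc] using padicV_le hp.one_lt k c
  have hgcd : (p ^ k).gcd c.val = p ^ v := by
    rw [← Nat.ordProj_mul_ordCompl_eq_self c.val p,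
      Nat.Coprime.gcd_mul_right_cancel_right _ ((Nat.coprime_ordCompl hp hval).pow_left k).symm,
      Nat.gcd_eq_right (pow_dvd_pow p hvk)]
  have := ZMod.addOrderOf_coe c.val (pow_ne_zero k hp.ne_zero)
  rwa [ZMod.natCast_zmod_val, hgcd, Nat.pow_div hvk hp.pos] at this

theorem affinePerm_iterate_sub_self (m : ℕ) (a : (ZMod m)ˣ) (b x : ZMod m) (n : ℕ) :
    (affinePerm m a b)^[n] x - x =
      (∑ i ∈ Finset.range n, (a : ZMod m) ^ i) * ((a - 1) * x + b) := by
  induction n with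
  | zero => simp
  | succ n ih =>
    rw [Function.iterate_succ_apply', geom_sum_succ]
    change (a : ZMod m) * _ + b - x = _
    linear_combination (a : ZMod m) * ih

/-- For `k ≥ 3`, `a ≡ 1 (mod 4)` a unit of `ℤ/2^kℤ` and `b` with `v(b) < v(a−1)`, every
point of `ℤ/2^kℤ` lies on a cycle of `λ(a,b)` of length exactly
`addord(b) = 2^{k−v(b)}`. -/
theorem stmt12 (k : ℕ) (hk : 3 ≤ k) (a : (ZMod (2 ^ k))ˣ)
    (ha : ZMod.castHom
        (show (4 : ℕ) ∣ 2 ^ k by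
          have h4 : (2 : ℕ) ^ 2 ∣ 2 ^ k := pow_dvd_pow 2 (by omega)
          norm_num at h4; exact h4)
        (ZMod 4) (a : ZMod (2 ^ k)) = 1)
    (b : ZMod (2 ^ k))
    (hb : padicV 2 k b < padicV 2 k ((a : ZMod (2 ^ k)) - 1)) :
    (∀ x : ZMod (2 ^ k),
      Function.minimalPeriod (fun y => (affinePerm (2 ^ k) a b) y) x = addOrderOf b) ∧
    addOrderOf b = 2 ^ (k - padicV 2 k b) := by
  have : NeZero (2 ^ k) := ⟨by positivity⟩
  have hordb := addOrderOf_eq_pow_sub_padicV Nat.prime_two b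
  refine ⟨fun x => ?_, hordb⟩
  have hc : addOrderOf (((a : ZMod (2 ^ k)) - 1) * x + b) = 2 ^ (k - padicV 2 k b) := by
    rw [add_comm, ← hordb]
    refine addOrderOf_add_eq_left_of_prime_mul_dvd Nat.prime_two hordb
      ((mul_dvd_mul_left 2 (addOrderOf_mul_dvd_addOrderOf_left _ x)).trans ?_)
    have := padicV_le one_lt_two k ((a : ZMod (2 ^ k)) - 1)
    rw [addOrderOf_eq_pow_sub_padicV Nat.prime_two, hordb, ← pow_succ']
    exact pow_dvd_pow 2 (by omega)
  have hA : (4 : ℤ) ∣ ((a : ZMod (2 ^ k)).val : ℤ) - 1 :=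
    ZMod.dvd_val_sub_one_of_castHom_eq_one _ ha
  rw [hordb]
  refine Nat.dvd_right_iff_eq.mp fun n => ?_
  rw [← Function.isPeriodicPt_iff_minimalPeriod_dvd, Function.IsPeriodicPt, Function.IsFixedPt,
    ← sub_eq_zero, affinePerm_iterate_sub_self]
  exact geom_sum_mul_eq_zero_iff_two_pow_dvd hA (by simp) hc n
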